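/- For every n ∈ ℕ, n ≥ 1, and all z, ζ in the open unit disk D it holds that 1/(1 - conj(z)·ζ) = Σ_{k=0}^{n-1} conj(φ_k(z))·φ_k(ζ) + conj(B_n(z))·B_n(ζ)/(1 - conj(z)·ζ), where (φ_k) is the Takenaka–Malmquist system and B_n is the associated Blaschke product of degree n. -/

import Mathlib

open Complex MeasureTheory Finset

/-- The unimodular factor `|c|/c`, set to `-1` when `c = 0`. -/
noncomputable def unitFactor (c : ℂ) : ℂ :=
  if c = 0 then -1 else ((‖c‖ : ℝ) : ℂ) / c

/-- The Takenaka–Malmquist system generated by the sequence `a`. -/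
noncomputable def TM (a : ℕ → ℂ) (k : ℕ) (z : ℂ) : ℂ :=
  ((Real.sqrt (1 - ‖a k‖ ^ 2) : ℝ) : ℂ) / (1 - (starRingEnd ℂ) (a k) * z) *
    ∏ j ∈ Finset.range k, (-(unitFactor (a j))) * ((z - a j) / (1 - (starRingEnd ℂ) (a j) * z))

/-- The Blaschke product of degree `k` associated with the sequence `a` (with `τ = 1`). -/
noncomputable def Blaschke (a : ℕ → ℂ) (k : ℕ) (z : ℂ) : ℂ :=
  ∏ j ∈ Finset.range k, (z - a j) / (1 - (starRingEnd ℂ) (a j) * z)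

/-- Integral over the unit circle with respect to the normalized Lebesgue measure σ
(complex-valued integrand). -/
noncomputable def circleAvg (f : ℂ → ℂ) : ℂ :=
  (1 / (2 * Real.pi) : ℂ) * ∫ θ in (0:ℝ)..(2 * Real.pi), f (Complex.exp (θ * Complex.I))

/-- Integral over the unit circle with respect to the normalized Lebesgue measure σ
(real-valued integrand). -/
noncomputable def circleAvgR (f : ℂ → ℝ) : ℝ :=
  (1 / (2 * Real.pi)) * ∫ θ in (0:ℝ)..(2 * Real.pi), f (Complex.exp (θ * Complex.I))

/-- The Fourier coefficient `c_m(f)` of `f` in the Takenaka–Malmquist system. -/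
noncomputable def fourierCoef (a : ℕ → ℂ) (f : ℂ → ℂ) (m : ℕ) : ℂ :=
  circleAvg (fun t => f t * (starRingEnd ℂ) (TM a m t))

/-- The weighted Bergman kernel `K_α(z; w) = 1/(1 - z·conj w)^(2+α)`. -/
noncomputable def bergman (α : ℕ) (w z : ℂ) : ℂ :=
  1 / (1 - z * (starRingEnd ℂ) w) ^ (2 + α)

/-- The partial sum `S_{n+1}(K_α)(z; w)` of the Fourier series of `K_α(·; w)` in the
Takenaka–Malmquist system. -/
noncomputable def partialSum (a : ℕ → ℂ) (α : ℕ) (w : ℂ) (n : ℕ) (z : ℂ) : ℂ :=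
  ∑ m ∈ Finset.range (n + 1), fourierCoef a (bergman α w) m * TM a m z

open ComplexConjugate

/-!
A Blaschke factor `b_c(z) = (z - c)/(1 - c̄ z)` satisfies
`1 - conj (b_c z) · b_c ζ = (1 - |c|²)(1 - z̄ζ) / ((1 - c z̄)(1 - c̄ζ))`, while
`conj (φ_k z) · φ_k ζ = (1 - |a_k|²) / ((1 - a_k z̄)(1 - ā_k ζ)) · conj (B_k z) · B_k ζ`
since the unimodular constants cancel. Multiplying the first identity for `c = a_k` by
`conj (B_k z) B_k ζ / (1 - z̄ζ)` shows that `conj (B_k z) B_k ζ / (1 - z̄ζ)` drops by exactly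
`conj (φ_k z) φ_k ζ` from `k` to `k + 1`, so the sum telescopes down from `B_0 = 1`.
-/

lemma conj_unitFactor_mul_self (c : ℂ) : conj (unitFactor c) * unitFactor c = 1 := by
  unfold unitFactor
  split_ifs with hc
  · simp
  · rw [map_div₀, conj_ofReal, div_mul_div_comm, mul_comm (conj c), mul_conj', ← sq]
    exact div_self (pow_ne_zero 2 (by simpa using hc))

lemma one_sub_mul_ne_zero_of_norm_lt_one {z w : ℂ} (hz : ‖z‖ < 1) (hw : ‖w‖ ≤ 1) :
    1 - z * w ≠ 0 := by
  rw [sub_ne_zero, ne_comm]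
  refine ne_of_apply_ne norm (ne_of_lt ?_)
  simpa using mul_lt_one_of_nonneg_of_lt_one_left (norm_nonneg z) hz hw

noncomputable def blaschkeFactor (c z : ℂ) : ℂ :=
  (z - c) / (1 - conj c * z)

lemma Blaschke_eq_prod_blaschkeFactor (a : ℕ → ℂ) (k : ℕ) (z : ℂ) :
    Blaschke a k z = ∏ j ∈ range k, blaschkeFactor (a j) z :=
  rfl

lemma Blaschke_succ (a : ℕ → ℂ) (k : ℕ) (z : ℂ) :
    Blaschke a (k + 1) z = Blaschke a k z * blaschkeFactor (a k) z :=
  prod_range_succ _ _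

lemma one_sub_conj_blaschkeFactor_mul {c z ζ : ℂ} (hz : 1 - conj c * z ≠ 0)
    (hζ : 1 - conj c * ζ ≠ 0) :
    1 - conj (blaschkeFactor c z) * blaschkeFactor c ζ =
      (1 - ‖c‖ ^ 2 : ℝ) * (1 - conj z * ζ) / (conj (1 - conj c * z) * (1 - conj c * ζ)) := by
  have hz' : conj (1 - conj c * z) ≠ 0 := (map_ne_zero _).mpr hz
  unfold blaschkeFactor
  rw [ofReal_sub, ofReal_one, ofReal_pow, ← mul_conj', map_div₀, div_mul_div_comm, one_sub_div (mul_ne_zero hz' hζ)]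
  congr 1
  simp only [map_sub, map_mul, map_one, conj_conj]
  ring

lemma conj_TM_mul_TM (a : ℕ → ℂ) (k : ℕ) (hak : ‖a k‖ ≤ 1) (z ζ : ℂ) :
    conj (TM a k z) * TM a k ζ =
      (1 - ‖a k‖ ^ 2 : ℝ) / (conj (1 - conj (a k) * z) * (1 - conj (a k) * ζ)) *
        (conj (Blaschke a k z) * Blaschke a k ζ) := by
  have hsqrt : ((√(1 - ‖a k‖ ^ 2) : ℝ) : ℂ) * (√(1 - ‖a k‖ ^ 2) : ℝ) = (1 - ‖a k‖ ^ 2 : ℝ) := by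
    rw [← ofReal_mul, Real.mul_self_sqrt (by nlinarith [norm_nonneg (a k)])]
  have hprod : conj (∏ j ∈ range k, -unitFactor (a j) * blaschkeFactor (a j) z) *
      ∏ j ∈ range k, -unitFactor (a j) * blaschkeFactor (a j) ζ =
        conj (Blaschke a k z) * Blaschke a k ζ := by
    rw [Blaschke_eq_prod_blaschkeFactor, Blaschke_eq_prod_blaschkeFactor, map_prod, map_prod,
      ← prod_mul_distrib, ← prod_mul_distrib]
    refine prod_congr rfl fun j _ => ?_
    rw [map_mul, map_neg]
    linear_combination conj (blaschkeFactor (a j) z) * blaschkeFactor (a j) ζ *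
      conj_unitFactor_mul_self (a j)
  rw [TM, TM, map_mul, mul_mul_mul_comm, map_div₀, conj_ofReal, div_mul_div_comm, hsqrt]
  exact congrArg _ hprod

lemma conj_Blaschke_mul_div_eq_add (a : ℕ → ℂ) (k : ℕ) (hak : ‖a k‖ < 1) {z ζ : ℂ}
    (hz : ‖z‖ < 1) (hζ : ‖ζ‖ < 1) :
    conj (Blaschke a k z) * Blaschke a k ζ / (1 - conj z * ζ) =
      conj (TM a k z) * TM a k ζ +
        conj (Blaschke a (k + 1) z) * Blaschke a (k + 1) ζ / (1 - conj z * ζ) := by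
  have hak' : ‖conj (a k)‖ < 1 := by simpa using hak
  have hdz := one_sub_mul_ne_zero_of_norm_lt_one hak' hz.le
  have hdζ := one_sub_mul_ne_zero_of_norm_lt_one hak' hζ.le
  have hd : 1 - conj z * ζ ≠ 0 :=
    one_sub_mul_ne_zero_of_norm_lt_one (by simpa using hz) hζ.le
  have hfactor : conj (blaschkeFactor (a k) z) * blaschkeFactor (a k) ζ =
      1 - (1 - ‖a k‖ ^ 2 : ℝ) * (1 - conj z * ζ) /
        (conj (1 - conj (a k) * z) * (1 - conj (a k) * ζ)) := by
    rw [← one_sub_conj_blaschkeFactor_mul hdz hdζ, sub_sub_cancel]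
  rw [conj_TM_mul_TM a k hak.le, Blaschke_succ, Blaschke_succ, map_mul, mul_mul_mul_comm,
    hfactor]
  field_simp
  ring

theorem christoffel_identity_general (a : ℕ → ℂ) (ha : ∀ k, ‖a k‖ < 1)
    (n : ℕ) (z ζ : ℂ) (hz : ‖z‖ < 1) (hζ : ‖ζ‖ < 1) :
    1 / (1 - (starRingEnd ℂ) z * ζ) =
      (∑ k ∈ Finset.range n, (starRingEnd ℂ) (TM a k z) * TM a k ζ) +
        (starRingEnd ℂ) (Blaschke a n z) * Blaschke a n ζ / (1 - (starRingEnd ℂ) z * ζ) := by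
  rw [sum_range_induction _
    (fun m => (1 - conj (Blaschke a m z) * Blaschke a m ζ) / (1 - conj z * ζ)) (by simp [Blaschke]) n
    (fun k _ => by linear_combination conj_Blaschke_mul_div_eq_add a k (ha k) hz hζ)]
  ring

/-- Christoffel-type identity: For every `n ≥ 1` and all `z, ζ` in the open
unit disk, `1/(1 - conj(z)·ζ) = ∑_{k=0}^{n-1} conj(φ_k(z))·φ_k(ζ) +
conj(B_n(z))·B_n(ζ)/(1 - conj(z)·ζ)`, where `(φ_k)` is the Takenaka–Malmquist system and
`B_n` the associated Blaschke product of degree `n`. -/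
theorem christoffel_identity (a : ℕ → ℂ) (ha : ∀ k, ‖a k‖ < 1)
    (n : ℕ) (hn : 1 ≤ n) (z ζ : ℂ) (hz : ‖z‖ < 1) (hζ : ‖ζ‖ < 1) :
    1 / (1 - (starRingEnd ℂ) z * ζ) =
      (∑ k ∈ Finset.range n, (starRingEnd ℂ) (TM a k z) * TM a k ζ) +
        (starRingEnd ℂ) (Blaschke a n z) * Blaschke a n ζ / (1 - (starRingEnd ℂ) z * ζ) :=
  christoffel_identity_general a ha n z ζ hz hζ
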